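/- arXiv:2403.06701 — 2 statements merged into one kernel-verified Lean document; each statement's English description precedes it below -/
import Mathlib

section
/- For an odd integer p > 0, the Dedekind sum s(2,p) equals (p-1)(p-5)/(24p). -/
/-- The sawtooth function `((x))`: `x - ⌊x⌋ - 1/2` for non-integer `x`, and `0` for integer `x`. -/
noncomputable def sawtooth (x : ℚ) : ℚ :=
  if x = (⌊x⌋ : ℚ) then 0 else x - ⌊x⌋ - 1/2

/-- The Dedekind sum `s(q,p) = ∑_{k=1}^{p-1} ((k/p)) ((kq/p))`. -/
noncomputable def dedekindSum (q p : ℤ) : ℚ :=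
  ∑ k ∈ Finset.Icc (1 : ℤ) (p - 1), sawtooth ((k : ℚ) / p) * sawtooth ((k * q : ℚ) / p)


lemma sawtooth_lt_one (x : ℚ) (h0 : 0 < x) (h1 : x < 1) :
    (if x = ((⌊x⌋ : ℤ) : ℚ) then (0:ℚ) else x - ⌊x⌋ - 1/2) = x - 1/2 := by
  have hf : ⌊x⌋ = 0 := Int.floor_eq_zero_iff.2 ⟨le_of_lt h0, h1⟩
  rw [hf]
  simp [h0.ne']

lemma sawtooth_lt_two (x : ℚ) (h0 : 1 < x) (h1 : x < 2) :
    (if x = ((⌊x⌋ : ℤ) : ℚ) then (0:ℚ) else x - ⌊x⌋ - 1/2) = x - 3/2 := by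
  have hf : ⌊x⌋ = 1 := by
    rw [Int.floor_eq_iff]
    constructor <;> push_cast <;> linarith
  rw [hf]
  have : x ≠ 1 := ne_of_gt h0
  push_cast
  simp only [this, if_false]
  ring

lemma icc_insert_top (a b : ℤ) (h : a ≤ b + 1) :
    insert (b+1) (Finset.Icc a b) = Finset.Icc a (b+1) := by
  ext x; simp only [Finset.mem_insert, Finset.mem_Icc]; omega

lemma sum_id_icc (n : ℕ) : ∑ k ∈ Finset.Icc (1:ℤ) (n:ℤ), (k:ℚ) = n*(n+1)/2 := by
  induction n with
  | zero => simp
  | succ n ih =>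
    have h : ((n+1 : ℕ) : ℤ) = (n : ℤ) + 1 := by push_cast; ring
    rw [h, ← icc_insert_top 1 n (by omega), Finset.sum_insert (by simp)]
    rw [ih]; push_cast; ring

lemma sum_sq_icc (n : ℕ) : ∑ k ∈ Finset.Icc (1:ℤ) (n:ℤ), (k:ℚ)^2 = n*(n+1)*(2*n+1)/6 := by
  induction n with
  | zero => simp
  | succ n ih =>
    have h : ((n+1 : ℕ) : ℤ) = (n : ℤ) + 1 := by push_cast; ring
    rw [h, ← icc_insert_top 1 n (by omega), Finset.sum_insert (by simp)]
    rw [ih]; push_cast; ring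

lemma icc_union (a b c : ℤ) (h1 : a ≤ b + 1) (h2 : b ≤ c) :
    Finset.Icc a b ∪ Finset.Icc (b+1) c = Finset.Icc a c := by
  ext x; simp only [Finset.mem_union, Finset.mem_Icc]; omega

lemma icc_disj (a b c : ℤ) :
    Disjoint (Finset.Icc a b) (Finset.Icc (b+1) c) := by
  rw [Finset.disjoint_left]; intro x hx hx'
  simp only [Finset.mem_Icc] at hx hx'; omega

lemma expand_sum (S : Finset ℤ) (P c : ℚ) :
    ∑ k ∈ S, (((k:ℚ)/P - 1/2)*((k*2:ℚ)/P - c))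
      = (2/P^2) * (∑ k ∈ S, (k:ℚ)^2) - ((c+1)/P) * (∑ k ∈ S, (k:ℚ))
        + (c/2) * S.card := by
  rw [Finset.mul_sum, Finset.mul_sum, ← Finset.sum_sub_distrib,
    show (c/2) * (S.card:ℚ) = ∑ _k ∈ S, (c/2) by
      rw [Finset.sum_const]; simp [mul_comm],
    ← Finset.sum_add_distrib]
  apply Finset.sum_congr rfl
  intro k _
  ring

theorem dedekindSum_two (p : ℤ) (hp : 0 < p) (hodd : Odd p) :
    dedekindSum 2 p = ((p : ℚ) - 1) * ((p : ℚ) - 5) / (24 * p) := by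
  obtain ⟨j, hj⟩ := hodd
  have hj0 : 0 ≤ j := by omega
  lift j to ℕ using hj0 with m
  subst hj
  unfold dedekindSum
  push_cast
  set P : ℚ := 2 * (m:ℚ) + 1 with hP
  have hPpos : (0:ℚ) < P := by positivity
  have hPne : P ≠ 0 := ne_of_gt hPpos
  rw [show (2*(m:ℤ)+1-1) = 2*(m:ℤ) from by ring]
  rw [← icc_union 1 m (2*m) (by omega) (by omega),
    Finset.sum_union (icc_disj 1 m (2*m))]
  have e1 : ∑ k ∈ Finset.Icc (1:ℤ) (m:ℤ),
      sawtooth ((k : ℚ) / P) * sawtooth ((k : ℚ) * 2 / P)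
      = ∑ k ∈ Finset.Icc (1:ℤ) (m:ℤ), (((k:ℚ)/P - 1/2)*((k*2:ℚ)/P - (1/2))) := by
    apply Finset.sum_congr rfl
    intro k hk
    simp only [Finset.mem_Icc] at hk
    have hk1 : (1:ℚ) ≤ (k:ℚ) := by exact_mod_cast hk.1
    have hk2 : (k:ℚ) ≤ (m:ℚ) := by exact_mod_cast hk.2
    unfold sawtooth
    rw [sawtooth_lt_one ((k:ℚ)/P) (div_pos (by linarith) hPpos)
        (by rw [div_lt_one hPpos]; nlinarith),
      sawtooth_lt_one ((k:ℚ)*2/P) (div_pos (by linarith) hPpos)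
        (by rw [div_lt_one hPpos]; nlinarith)]
  have e2 : ∑ k ∈ Finset.Icc ((m:ℤ)+1) (2*(m:ℤ)),
      sawtooth ((k : ℚ) / P) * sawtooth ((k : ℚ) * 2 / P)
      = ∑ k ∈ Finset.Icc ((m:ℤ)+1) (2*(m:ℤ)), (((k:ℚ)/P - 1/2)*((k*2:ℚ)/P - (3/2))) := by
    apply Finset.sum_congr rfl
    intro k hk
    simp only [Finset.mem_Icc] at hk
    have hk1 : (m:ℚ) + 1 ≤ (k:ℚ) := by exact_mod_cast hk.1
    have hk2 : (k:ℚ) ≤ 2*(m:ℚ) := by exact_mod_cast hk.2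
    unfold sawtooth
    rw [sawtooth_lt_one ((k:ℚ)/P) (div_pos (by linarith) hPpos)
        (by rw [div_lt_one hPpos]; nlinarith),
      sawtooth_lt_two ((k:ℚ)*2/P)
        (by rw [lt_div_iff₀ hPpos]; nlinarith)
        (by rw [div_lt_iff₀ hPpos]; nlinarith)]
  rw [e1, e2, expand_sum, expand_sum]
  have hs1 : ∑ k ∈ Finset.Icc ((m:ℤ)+1) (2*(m:ℤ)), (k:ℚ)
      = ∑ k ∈ Finset.Icc (1:ℤ) (2*(m:ℤ)), (k:ℚ) - ∑ k ∈ Finset.Icc (1:ℤ) (m:ℤ), (k:ℚ) := by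
    rw [← icc_union 1 m (2*m) (by omega) (by omega),
      Finset.sum_union (icc_disj 1 m (2*m))]
    ring
  have hs2 : ∑ k ∈ Finset.Icc ((m:ℤ)+1) (2*(m:ℤ)), (k:ℚ)^2
      = ∑ k ∈ Finset.Icc (1:ℤ) (2*(m:ℤ)), (k:ℚ)^2 - ∑ k ∈ Finset.Icc (1:ℤ) (m:ℤ), (k:ℚ)^2 := by
    rw [← icc_union 1 m (2*m) (by omega) (by omega),
      Finset.sum_union (icc_disj 1 m (2*m))]
    ring
  have h2m : ((2*m : ℕ) : ℤ) = 2 * (m:ℤ) := by push_cast [Nat.cast_mul]; ring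
  have sA : ∑ k ∈ Finset.Icc (1:ℤ) (m:ℤ), (k:ℚ) = m*(m+1)/2 := sum_id_icc m
  have sB : ∑ k ∈ Finset.Icc (1:ℤ) (m:ℤ), (k:ℚ)^2 = m*(m+1)*(2*m+1)/6 := sum_sq_icc m
  have sC : ∑ k ∈ Finset.Icc (1:ℤ) (2*(m:ℤ)), (k:ℚ) = (2*(m:ℚ))*(2*m+1)/2 := by
    have := sum_id_icc (2*m); rw [h2m] at this; rw [this]; push_cast; ring
  have sD : ∑ k ∈ Finset.Icc (1:ℤ) (2*(m:ℤ)), (k:ℚ)^2 = (2*(m:ℚ))*(2*m+1)*(4*m+1)/6 := by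
    have := sum_sq_icc (2*m); rw [h2m] at this; rw [this]; push_cast; ring
  have card1 : ((Finset.Icc (1:ℤ) (m:ℤ)).card : ℚ) = m := by
    rw [Int.card_Icc]
    have : ((m:ℤ) + 1 - 1).toNat = m := by omega
    rw [this]
  have card2 : ((Finset.Icc ((m:ℤ)+1) (2*(m:ℤ))).card : ℚ) = m := by
    rw [Int.card_Icc]
    have : (2*(m:ℤ) + 1 - ((m:ℤ)+1)).toNat = m := by omega
    rw [this]
  rw [hs1, hs2, sA, sB, sC, sD, card1, card2]
  field_simp
  ring
end

section
/- For an odd integer p > 0, p·(s(1,p) + s(2,p)) = (p-1)(p-3)/8, where s denotes the Dedekind sum. -/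
private lemma sum_Ioc_split (a b c : ℤ) (hab : a ≤ b) (hbc : b ≤ c) (f : ℤ → ℚ) :
    ∑ k ∈ Finset.Ioc a c, f k = ∑ k ∈ Finset.Ioc a b, f k + ∑ k ∈ Finset.Ioc b c, f k := by
  rw [← Finset.sum_union]
  · rw [Finset.Ioc_union_Ioc_eq_Ioc hab hbc]
  · rw [Finset.disjoint_left]
    intro x hx hx'
    simp only [Finset.mem_Ioc] at hx hx'
    omega

private lemma sum_Ioc_id (n : ℤ) (hn : 0 ≤ n) :
    ∑ k ∈ Finset.Ioc (0:ℤ) n, (k:ℚ) = n*(n+1)/2 := by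
  refine Int.le_induction (motive := fun n _ => ∑ k ∈ Finset.Ioc (0:ℤ) n, (k:ℚ) = n*(n+1)/2) ?_ ?_ n hn
  · simp
  · intro n hn ih
    rw [sum_Ioc_split 0 n (n+1) hn (by omega)]
    have : Finset.Ioc n (n+1) = {n+1} := by
      ext x; simp only [Finset.mem_Ioc, Finset.mem_singleton]; omega
    rw [this, Finset.sum_singleton, ih]
    push_cast
    ring

private lemma sum_Ioc_sq (n : ℤ) (hn : 0 ≤ n) :
    ∑ k ∈ Finset.Ioc (0:ℤ) n, (k:ℚ)^2 = n*(n+1)*(2*n+1)/6 := by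
  refine Int.le_induction (motive := fun n _ => ∑ k ∈ Finset.Ioc (0:ℤ) n, (k:ℚ)^2 = n*(n+1)*(2*n+1)/6) ?_ ?_ n hn
  · simp
  · intro n hn ih
    rw [sum_Ioc_split 0 n (n+1) hn (by omega)]
    have : Finset.Ioc n (n+1) = {n+1} := by
      ext x; simp only [Finset.mem_Ioc, Finset.mem_singleton]; omega
    rw [this, Finset.sum_singleton, ih]
    push_cast
    ring

private lemma floor_div_eq (a b m : ℤ) (hb : 0 < b) (h1 : m * b ≤ a) (h2 : a < (m+1) * b) :
    ⌊(a:ℚ)/b⌋ = m := by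
  have hb' : (0:ℚ) < b := by exact_mod_cast hb
  rw [Int.floor_eq_iff]
  constructor
  · rw [le_div_iff₀ hb']
    exact_mod_cast h1
  · rw [div_lt_iff₀ hb']
    push_cast
    exact_mod_cast h2

private lemma sawtooth_eq (a b m : ℤ) (hb : 0 < b) (h1 : m * b < a) (h2 : a < (m+1) * b) :
    sawtooth ((a:ℚ)/b) = (a:ℚ)/b - m - 1/2 := by
  have hfl : ⌊(a:ℚ)/b⌋ = m := floor_div_eq a b m hb (le_of_lt h1) h2
  have hb' : (0:ℚ) < b := by exact_mod_cast hb
  rw [sawtooth, hfl, if_neg, ]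
  intro h
  rw [div_eq_iff (ne_of_gt hb')] at h
  have : (a:ℚ) = (m*b : ℤ) := by push_cast; linarith [h]
  have : a = m * b := by exact_mod_cast this
  omega

theorem dedekindSum_one_add_two (p : ℤ) (hp : 0 < p) (hodd : Odd p) :
    (p : ℚ) * (dedekindSum 1 p + dedekindSum 2 p) = ((p : ℚ) - 1) * ((p : ℚ) - 3) / 8 := by
  obtain ⟨n, hn⟩ := hodd
  have hn0 : 0 ≤ n := by omega
  have hIcc : Finset.Icc (1:ℤ) (p-1) = Finset.Ioc (0:ℤ) (2*n) := by
    ext x; simp only [Finset.mem_Icc, Finset.mem_Ioc]; omega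
  have hp' : (p:ℚ) = 2*n+1 := by rw [hn]; push_cast; ring
  -- sum 1: each term for k in Ioc 0 (2n)
  have h1 : dedekindSum 1 p = ∑ k ∈ Finset.Ioc (0:ℤ) (2*n), ((k:ℚ)/p - 1/2) * ((k:ℚ)/p - 1/2) := by
    rw [dedekindSum, hIcc]
    apply Finset.sum_congr rfl
    intro k hk
    simp only [Finset.mem_Ioc] at hk
    have hs : sawtooth ((k:ℚ)/p) = (k:ℚ)/p - 0 - 1/2 := by
      apply sawtooth_eq k p 0 hp (by omega) (by omega)
    simp only [Int.cast_one, mul_one]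
    rw [hs]
    ring
  have h2 : dedekindSum 2 p
      = ∑ k ∈ Finset.Ioc (0:ℤ) n, ((k:ℚ)/p - 1/2) * (2*(k:ℚ)/p - 1/2)
      + ∑ k ∈ Finset.Ioc n (2*n), ((k:ℚ)/p - 1/2) * (2*(k:ℚ)/p - 3/2) := by
    rw [dedekindSum, hIcc, sum_Ioc_split 0 n (2*n) hn0 (by omega)]
    congr 1
    · apply Finset.sum_congr rfl
      intro k hk
      simp only [Finset.mem_Ioc] at hk
      have hs : sawtooth ((k:ℚ)/p) = (k:ℚ)/p - 0 - 1/2 :=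
        sawtooth_eq k p 0 hp (by omega) (by omega)
      have hs2 : sawtooth (((k*2 : ℤ):ℚ)/p) = ((k*2:ℤ):ℚ)/p - 0 - 1/2 :=
        sawtooth_eq (k*2) p 0 hp (by omega) (by omega)
      push_cast at hs2 ⊢
      rw [hs, hs2]
      ring
    · apply Finset.sum_congr rfl
      intro k hk
      simp only [Finset.mem_Ioc] at hk
      have hs : sawtooth ((k:ℚ)/p) = (k:ℚ)/p - 0 - 1/2 :=
        sawtooth_eq k p 0 hp (by omega) (by omega)
      have hs2 : sawtooth (((k*2 : ℤ):ℚ)/p) = ((k*2:ℤ):ℚ)/p - 1 - 1/2 :=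
        sawtooth_eq (k*2) p 1 hp (by omega) (by omega)
      push_cast at hs2 ⊢
      rw [hs, hs2]
      ring
  -- now reduce all sums to polynomial sums
  have hpne : (p:ℚ) ≠ 0 := by
    rw [hp']
    have : (0:ℚ) ≤ (n:ℚ) := by exact_mod_cast hn0
    positivity
  have e1 : ∀ (k : ℤ), ((k:ℚ)/p - 1/2) * ((k:ℚ)/p - 1/2)
      = (1/(p:ℚ)^2) * (k:ℚ)^2 + (-(1:ℚ)/p) * (k:ℚ) + 1/4 := by
    intro k; field_simp; ring
  have e2 : ∀ (k : ℤ), ((k:ℚ)/p - 1/2) * (2*(k:ℚ)/p - 1/2)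
      = (2/(p:ℚ)^2) * (k:ℚ)^2 + (-(3:ℚ)/(2*p)) * (k:ℚ) + 1/4 := by
    intro k; field_simp; ring
  have e3 : ∀ (k : ℤ), ((k:ℚ)/p - 1/2) * (2*(k:ℚ)/p - 3/2)
      = (2/(p:ℚ)^2) * (k:ℚ)^2 + (-(5:ℚ)/(2*p)) * (k:ℚ) + 3/4 := by
    intro k; field_simp; ring
  have card1 : (Finset.Ioc (0:ℤ) (2*n)).card = (2*n).toNat := Int.card_Ioc 0 (2*n) |>.trans (by omega)
  have card2 : (Finset.Ioc (0:ℤ) n).card = n.toNat := Int.card_Ioc 0 n |>.trans (by omega)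
  have card3 : (Finset.Ioc n (2*n)).card = n.toNat := Int.card_Ioc n (2*n) |>.trans (by omega)
  have sumId2 : ∑ k ∈ Finset.Ioc (0:ℤ) (2*n), (k:ℚ) = (2*n)*((2*n)+1)/2 := by
    have := sum_Ioc_id (2*n) (by omega); push_cast at this ⊢; linarith [this]
  have sumSq2 : ∑ k ∈ Finset.Ioc (0:ℤ) (2*n), (k:ℚ)^2 = (2*n)*((2*n)+1)*(2*(2*n)+1)/6 := by
    have := sum_Ioc_sq (2*n) (by omega); push_cast at this ⊢; linarith [this]
  have sumId1 : ∑ k ∈ Finset.Ioc (0:ℤ) n, (k:ℚ) = (n:ℚ)*((n:ℚ)+1)/2 := by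
    have := sum_Ioc_id n hn0; push_cast at this ⊢; linarith [this]
  have sumSq1 : ∑ k ∈ Finset.Ioc (0:ℤ) n, (k:ℚ)^2 = (n:ℚ)*((n:ℚ)+1)*(2*(n:ℚ)+1)/6 := by
    have := sum_Ioc_sq n hn0; push_cast at this ⊢; linarith [this]
  have sumId3 : ∑ k ∈ Finset.Ioc n (2*n), (k:ℚ) = (2*(n:ℚ))*((2*(n:ℚ))+1)/2 - (n:ℚ)*((n:ℚ)+1)/2 := by
    have h := sum_Ioc_split 0 n (2*n) hn0 (by omega) (fun k => (k:ℚ))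
    rw [sumId2, sumId1] at h; linarith
  have sumSq3 : ∑ k ∈ Finset.Ioc n (2*n), (k:ℚ)^2
      = (2*(n:ℚ))*((2*(n:ℚ))+1)*(2*(2*(n:ℚ))+1)/6 - (n:ℚ)*((n:ℚ)+1)*(2*(n:ℚ)+1)/6 := by
    have h := sum_Ioc_split 0 n (2*n) hn0 (by omega) (fun k => (k:ℚ)^2)
    rw [sumSq2, sumSq1] at h; linarith
  rw [h1, h2]
  simp only [e1, e2, e3]
  simp only [Finset.sum_add_distrib, ← Finset.mul_sum, Finset.sum_const, nsmul_eq_mul,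
    card1, card2, card3, sumId1, sumId2, sumId3, sumSq1, sumSq2, sumSq3]
  have htn : ((2*n).toNat : ℚ) = 2*(n:ℚ) := by
    have : ((2*n).toNat : ℤ) = 2*n := by omega
    exact_mod_cast congrArg (Int.cast : ℤ → ℚ) this
  have htn2 : ((n.toNat) : ℚ) = (n:ℚ) := by
    have : ((n.toNat) : ℤ) = n := by omega
    exact_mod_cast congrArg (Int.cast : ℤ → ℚ) this
  rw [htn, htn2, hp']
  have hden : (2*(n:ℚ)+1) ≠ 0 := by rw [← hp']; exact hpne
  field_simp
  ring
end
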